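/- Let M be a right R-module. The following are equivalent: (1) M is an SIP module; (2) for every split monomorphism f: A → M where A is a direct summand of M, the submodule A ∩ f(A) is a direct summand of M; (3) for every split epimorphism f: M → M/A where A is a direct summand of M, the submodule A ∩ Ker(f) is a direct summand of M. -/

import Mathlib

universe u v w

section Defs

variable {S : Type u} [Ring S]

/-- A submodule `A` is a direct summand of `M`. -/
def IsDirectSummand {M : Type v} [AddCommGroup M] [Module S M] (A : Submodule S M) : Prop :=
  ∃ B : Submodule S M, A ⊓ B = ⊥ ∧ A ⊔ B = ⊤

/-- `A` is an essential submodule of `B`. -/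
def IsEssentialIn {M : Type v} [AddCommGroup M] [Module S M] (A B : Submodule S M) : Prop :=
  A ≤ B ∧ ∀ K : Submodule S M, K ≤ B → K ≠ ⊥ → A ⊓ K ≠ ⊥

/-- `A` is essential in some direct summand of `M`. -/
def EssentialInSummand {M : Type v} [AddCommGroup M] [Module S M] (A : Submodule S M) : Prop :=
  ∃ D : Submodule S M, IsDirectSummand D ∧ IsEssentialIn A D

/-- `A` is a small (superfluous) submodule of `M`. -/
def IsSmallSubmodule {M : Type v} [AddCommGroup M] [Module S M] (A : Submodule S M) : Prop :=
  ∀ K : Submodule S M, A ⊔ K = ⊤ → K = ⊤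

/-- `A` lies above the direct summand `D` of `M`, i.e. `D ≤ A` and `A/D` is small in `M/D`. -/
def LiesAbove {M : Type v} [AddCommGroup M] [Module S M] (A D : Submodule S M) : Prop :=
  IsDirectSummand D ∧ D ≤ A ∧ IsSmallSubmodule (Submodule.map D.mkQ A)

/-- `A` lies above some direct summand of `M`. -/
def LiesAboveSummand {M : Type v} [AddCommGroup M] [Module S M] (A : Submodule S M) : Prop :=
  ∃ D : Submodule S M, LiesAbove A D

end Defs

section ModDefs

variable (S : Type u) [Ring S]

/-- SSP: the sum of any two direct summands is a direct summand. -/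
def HasSSP (M : Type v) [AddCommGroup M] [Module S M] : Prop :=
  ∀ A B : Submodule S M, IsDirectSummand A → IsDirectSummand B → IsDirectSummand (A ⊔ B)

/-- SIP: the intersection of any two direct summands is a direct summand. -/
def HasSIP (M : Type v) [AddCommGroup M] [Module S M] : Prop :=
  ∀ A B : Submodule S M, IsDirectSummand A → IsDirectSummand B → IsDirectSummand (A ⊓ B)

/-- SIP-CS: the intersection of any finite family of direct summands is essential in a
direct summand. -/
def IsSIPCS (M : Type v) [AddCommGroup M] [Module S M] : Prop :=
  ∀ (ι : Type) [Fintype ι] (A : ι → Submodule S M),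
    (∀ i, IsDirectSummand (A i)) → EssentialInSummand (⨅ i, A i)

/-- SSP-lifting: if each member of a finite family of submodules lies above a direct summand,
then their sum lies above a direct summand. -/
def IsSSPLifting (M : Type v) [AddCommGroup M] [Module S M] : Prop :=
  ∀ (ι : Type) [Fintype ι] (A : ι → Submodule S M),
    (∀ i, LiesAboveSummand (A i)) → LiesAboveSummand (⨆ i, A i)

/-- C2 condition: every submodule isomorphic to a direct summand is a direct summand. -/
def HasC2 (M : Type v) [AddCommGroup M] [Module S M] : Prop :=
  ∀ A B : Submodule S M, IsDirectSummand B → Nonempty (A ≃ₗ[S] B) → IsDirectSummand A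

/-- C3 condition: the sum of two direct summands with zero intersection is a direct summand. -/
def HasC3 (M : Type v) [AddCommGroup M] [Module S M] : Prop :=
  ∀ A B : Submodule S M, IsDirectSummand A → IsDirectSummand B → A ⊓ B = ⊥ →
    IsDirectSummand (A ⊔ B)

/-- D2 condition: if `M/A` is isomorphic to a direct summand of `M` then `A` is a direct
summand. -/
def HasD2 (M : Type v) [AddCommGroup M] [Module S M] : Prop :=
  ∀ A : Submodule S M, (∃ B : Submodule S M, IsDirectSummand B ∧
    Nonempty ((M ⧸ A) ≃ₗ[S] B)) → IsDirectSummand A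

/-- D3 condition: if two direct summands sum to `M`, their intersection is a direct summand. -/
def IsD3Module (M : Type v) [AddCommGroup M] [Module S M] : Prop :=
  ∀ A B : Submodule S M, IsDirectSummand A → IsDirectSummand B → A ⊔ B = ⊤ →
    IsDirectSummand (A ⊓ B)

/-- `M` is relatively CS-Rickart to `N`. -/
def RelCSRickart (M : Type v) (N : Type w) [AddCommGroup M] [Module S M]
    [AddCommGroup N] [Module S N] : Prop :=
  ∀ φ : M →ₗ[S] N, EssentialInSummand (LinearMap.ker φ)

/-- `M` is relatively d-CS-Rickart to `N`. -/
def RelDCSRickart (M : Type v) (N : Type w) [AddCommGroup M] [Module S M]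
    [AddCommGroup N] [Module S N] : Prop :=
  ∀ φ : N →ₗ[S] M, LiesAboveSummand (LinearMap.range φ)

/-- CS-Rickart module. -/
def IsCSRickart (M : Type v) [AddCommGroup M] [Module S M] : Prop :=
  RelCSRickart S M M

/-- d-CS-Rickart module. -/
def IsDCSRickart (M : Type v) [AddCommGroup M] [Module S M] : Prop :=
  RelDCSRickart S M M

/-- `M` has an `Ω`-cover, where `Ω` is the class of modules satisfying `P`. -/
def HasCover (P : ModuleCat.{v} S → Prop) (M : Type v) [AddCommGroup M] [Module S M] : Prop :=
  ∃ (E : ModuleCat.{v} S) (g : E →ₗ[S] M), P E ∧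
    (∀ (E' : ModuleCat.{v} S), P E' → ∀ g' : E' →ₗ[S] M,
      ∃ h : E' →ₗ[S] E, g ∘ₗ h = g') ∧
    (∀ h : E →ₗ[S] E, g ∘ₗ h = g → Function.Bijective h)

/-- `M` has an `Ω`-envelope, where `Ω` is the class of modules satisfying `P`. -/
def HasEnvelope (P : ModuleCat.{v} S → Prop) (M : Type v) [AddCommGroup M] [Module S M] : Prop :=
  ∃ (E : ModuleCat.{v} S) (g : M →ₗ[S] E), P E ∧
    (∀ (E' : ModuleCat.{v} S), P E' → ∀ g' : M →ₗ[S] E',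
      ∃ h : E →ₗ[S] E', h ∘ₗ g = g') ∧
    (∀ h : E →ₗ[S] E, h ∘ₗ g = g → Function.Bijective h)

/-- `M` is 2-generated. -/
def TwoGenerated (M : Type v) [AddCommGroup M] [Module S M] : Prop :=
  ∃ a b : M, Submodule.span S ({a, b} : Set M) = ⊤

/-- `M` is finitely cogenerated. -/
def FinitelyCogenerated (M : Type v) [AddCommGroup M] [Module S M] : Prop :=
  ∀ 𝒜 : Set (Submodule S M), sInf 𝒜 = ⊥ →
    ∃ ℬ ⊆ 𝒜, ℬ.Finite ∧ sInf ℬ = ⊥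

/-- The socle of `M`: the sum of all simple submodules. -/
def SocleOf (M : Type v) [AddCommGroup M] [Module S M] : Submodule S M :=
  sSup {A : Submodule S M | IsSimpleModule S ↥A}

/-- An indecomposable module: nonzero, and its only direct summands are `0` and itself. -/
def IsIndecomposable (M : Type v) [AddCommGroup M] [Module S M] : Prop :=
  (⊤ : Submodule S M) ≠ ⊥ ∧
    ∀ A : Submodule S M, IsDirectSummand A → A = ⊥ ∨ A = ⊤

end ModDefs

section RingDefs

variable (R : Type u) [Ring R]

/-- The right annihilator of an element of a right `R`-module, as a right ideal of `R`. -/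
def rightAnnihilator {M : Type v} [AddCommGroup M] [Module Rᵐᵒᵖ M] (m : M) :
    Submodule Rᵐᵒᵖ R where
  carrier := {r : R | MulOpposite.op r • m = 0}
  add_mem' := by
    intro a b ha hb
    simp only [Set.mem_setOf_eq] at *
    rw [MulOpposite.op_add, add_smul, ha, hb, add_zero]
  zero_mem' := by simp
  smul_mem' := by
    intro c x hx
    simp only [Set.mem_setOf_eq] at *
    have : MulOpposite.op (c • x) = c * MulOpposite.op x := by
      rw [MulOpposite.smul_eq_mul_unop]
      simp [MulOpposite.op_mul]
    rw [this, mul_smul, hx, smul_zero]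

/-- `M` is a nonsingular right `R`-module. -/
def IsNonsingular (M : Type v) [AddCommGroup M] [Module Rᵐᵒᵖ M] : Prop :=
  ∀ m : M, IsEssentialIn (rightAnnihilator R m) (⊤ : Submodule Rᵐᵒᵖ R) → m = 0

/-- `R` is a right V-ring: every simple right `R`-module is injective. -/
def IsRightVRing : Prop :=
  ∀ (N : Type u) [AddCommGroup N] [Module Rᵐᵒᵖ N],
    IsSimpleModule Rᵐᵒᵖ N → Module.Injective Rᵐᵒᵖ N

/-- `R` is semiregular: `R/J(R)` is von Neumann regular and idempotents lift modulo `J(R)`. -/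
def IsSemiregularRing : Prop :=
  (∀ a : R, ∃ b : R, a - a * b * a ∈ Ideal.jacobson (⊥ : Ideal R) ∧ b = b * a * b) ∧
  (∀ a : R, a * a - a ∈ Ideal.jacobson (⊥ : Ideal R) →
    ∃ e : R, e * e = e ∧ e - a ∈ Ideal.jacobson (⊥ : Ideal R))

end RingDefs

/-!
Write `M = V ⊕ V₁`. For `h : V → V₁`, the map `v ↦ v + h v` is a split monomorphism `V → M`
(retracted by the projection onto `V`) with `V ∩ (v ↦ v + h v)(V) = ker h`; dually,
`x ↦ x - h (π_V x) mod V` is a split epimorphism `M → M/V` whose kernel meets `V` in `ker h`.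
So (2) and (3) each force `ker h` to be a summand for every such `h`.

Given summands `U` and `V`, let `p` be an idempotent with kernel `U` and `h = π_{V₁} ∘ p|_V`.
Then `ker h = K := V ∩ p⁻¹ V` is a `p`-invariant summand and `p|_K` is an idempotent with kernel
`U ∩ V`, so `U ∩ V` is a summand of `K`, hence of `M`. Conversely (1) gives (2) and (3) since
ranges of split monomorphisms and kernels of split epimorphisms are summands.
-/

open LinearMap Submodule

section SummandIntersection

variable {R : Type*} [Ring R] {M : Type*} [AddCommGroup M] [Module R M] {V V₁ : Submodule R M}

theorem isDirectSummand_iff_exists_isCompl {A : Submodule R M} :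
    IsDirectSummand A ↔ ∃ B, IsCompl A B := by
  simp only [IsDirectSummand, isCompl_iff, disjoint_iff, codisjoint_iff]

theorem IsIdempotentElem.isDirectSummand_range {e : Module.End R M} (he : IsIdempotentElem e) :
    IsDirectSummand (range e) :=
  isDirectSummand_iff_exists_isCompl.2 ⟨_, he.isCompl⟩

theorem IsIdempotentElem.isDirectSummand_ker {e : Module.End R M} (he : IsIdempotentElem e) :
    IsDirectSummand (ker e) :=
  isDirectSummand_iff_exists_isCompl.2 ⟨_, he.isCompl.symm⟩

theorem isDirectSummand_range_of_comp_eq_id {N : Type*} [AddCommGroup N] [Module R N]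
    {f : N →ₗ[R] M} {g : M →ₗ[R] N} (hgf : g ∘ₗ f = LinearMap.id) : IsDirectSummand (range f) := by
  have hidem : IsIdempotentElem (f ∘ₗ g) :=
    LinearMap.ext fun x ↦ congrArg f (LinearMap.congr_fun hgf (g x))
  have hg : range g = ⊤ :=
    range_eq_top.2 (Function.LeftInverse.surjective (LinearMap.ext_iff.1 hgf))
  simpa only [range_comp_of_range_eq_top f hg] using hidem.isDirectSummand_range

theorem isDirectSummand_ker_of_comp_eq_id {N : Type*} [AddCommGroup N] [Module R N]
    {f : M →ₗ[R] N} {g : N →ₗ[R] M} (hfg : f ∘ₗ g = LinearMap.id) : IsDirectSummand (ker f) := by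
  have hidem : IsIdempotentElem (g ∘ₗ f) :=
    LinearMap.ext fun x ↦ congrArg g (LinearMap.congr_fun hfg (f x))
  have hg : ker g = ⊥ := ker_eq_bot.2 (Function.LeftInverse.injective (LinearMap.ext_iff.1 hfg))
  simpa only [ker_comp_of_ker_eq_bot f hg] using hidem.isDirectSummand_ker

theorem IsDirectSummand.of_inf_eq_bot_of_sup_eq {A C K : Submodule R M} (hK : IsDirectSummand K)
    (hAC : A ⊓ C = ⊥) (hACK : A ⊔ C = K) : IsDirectSummand A := by
  obtain ⟨K', hKK'_inf, hKK'_sup⟩ := hK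
  refine ⟨C ⊔ K', ?_, by rw [← sup_assoc, hACK, hKK'_sup]⟩
  have hAK : A ≤ K := hACK ▸ le_sup_left
  have hCK : C ≤ K := hACK ▸ le_sup_right
  calc A ⊓ (C ⊔ K') = A ⊓ ((C ⊔ K') ⊓ K) := by rw [inf_comm _ K, ← inf_assoc, inf_eq_left.2 hAK]
    _ = ⊥ := by rw [sup_inf_assoc_of_le _ hCK, inf_comm K', hKK'_inf, sup_bot_eq, hAC]

theorem IsIdempotentElem.isDirectSummand_inf_ker {p : Module.End R M} (hp : IsIdempotentElem p)
    {K : Submodule R M} (hK : IsDirectSummand K) (hpK : K.map p ≤ K) :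
    IsDirectSummand (K ⊓ ker p) := by
  refine hK.of_inf_eq_bot_of_sup_eq (C := K.map p) ?_ (le_antisymm (sup_le inf_le_left hpK) ?_)
  · exact eq_bot_mono (inf_le_inf inf_le_right map_le_range) hp.isCompl.symm.inf_eq_bot
  · intro k hk
    have hpk : p k ∈ K := hpK (mem_map_of_mem hk)
    rw [← sub_add_cancel k (p k)]
    refine add_mem_sup ⟨sub_mem hk hpk, ?_⟩ (mem_map_of_mem hk)
    rw [SetLike.mem_coe, mem_ker, map_sub, ← Module.End.mul_apply, hp.eq, sub_self]

theorem IsIdempotentElem.isDirectSummand_ker_inf {p : Module.End R M} (hp : IsIdempotentElem p)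
    {V : Submodule R M} (hV : IsDirectSummand (V ⊓ V.comap p)) :
    IsDirectSummand (ker p ⊓ V) := by
  have hinv : (V ⊓ V.comap p).map p ≤ V ⊓ V.comap p := by
    rintro _ ⟨k, ⟨-, hk⟩, rfl⟩
    exact ⟨hk, by rwa [SetLike.mem_coe, mem_comap, ← Module.End.mul_apply, hp.eq]⟩
  convert hp.isDirectSummand_inf_ker hV hinv using 1
  ext x
  simp only [mem_inf, mem_ker, mem_comap]
  constructor
  · rintro ⟨hx, hxV⟩
    exact ⟨⟨hxV, hx ▸ zero_mem V⟩, hx⟩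
  · rintro ⟨⟨hxV, -⟩, hx⟩
    exact ⟨hx, hxV⟩

theorem inf_range_subtype_add_eq_map_ker (hV : Disjoint V V₁)
    (h : V →ₗ[R] V₁) : V ⊓ range (V.subtype + V₁.subtype ∘ₗ h) = (ker h).map V.subtype := by
  ext x
  simp only [mem_inf, mem_range, mem_map, mem_ker, LinearMap.add_apply, comp_apply,
    subtype_apply]
  constructor
  · rintro ⟨hxV, v, rfl⟩
    have hhv : (h v : M) = 0 :=
      disjoint_def.1 hV _ (by simpa using sub_mem hxV v.2) (h v).2
    exact ⟨v, by exact_mod_cast hhv, by rw [hhv, add_zero]⟩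
  · rintro ⟨v, hv, rfl⟩
    exact ⟨v.2, v, by simp [hv]⟩

theorem projectionOnto_comp_subtype_add (hV : IsCompl V V₁) (h : V →ₗ[R] V₁) :
    V.projectionOnto V₁ hV ∘ₗ (V.subtype + V₁.subtype ∘ₗ h) = LinearMap.id := by
  ext v
  simp

theorem inf_ker_mkQ_comp_sub_eq_map_ker (hV : IsCompl V V₁) (h : V →ₗ[R] V₁) :
    V ⊓ ker (V.mkQ ∘ₗ (LinearMap.id - V₁.subtype ∘ₗ h ∘ₗ V.projectionOnto V₁ hV)) =
      (ker h).map V.subtype := by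
  ext x
  simp only [mem_inf, mem_ker, mem_map, comp_apply, LinearMap.sub_apply, LinearMap.id_apply,
    subtype_apply, mkQ_apply, Quotient.mk_eq_zero]
  constructor
  · rintro ⟨hxV, hx⟩
    rw [projectionOnto_apply_of_mem_left hV hxV] at hx
    have hhx : (h ⟨x, hxV⟩ : M) = 0 :=
      disjoint_def.1 hV.disjoint _ (by simpa using sub_mem hxV hx) (h _).2
    exact ⟨⟨x, hxV⟩, by exact_mod_cast hhx, rfl⟩
  · rintro ⟨v, hv, rfl⟩
    simp [hv]

theorem mkQ_comp_sub_comp_quotientEquivOfIsCompl (hV : IsCompl V V₁) (h : V →ₗ[R] V₁) :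
    (V.mkQ ∘ₗ (LinearMap.id - V₁.subtype ∘ₗ h ∘ₗ V.projectionOnto V₁ hV)) ∘ₗ
      (V₁.subtype ∘ₗ (V.quotientEquivOfIsCompl V₁ hV).toLinearMap) = LinearMap.id := by
  refine LinearMap.ext fun y ↦ ?_
  simp only [comp_apply, LinearMap.sub_apply, LinearMap.id_apply, subtype_apply, mkQ_apply,
    LinearEquiv.coe_coe, projectionOnto_apply_right, map_zero, sub_zero,
    mk_quotientEquivOfIsCompl_apply]

theorem map_ker_projectionOnto_comp_eq_inf_comap (hV : IsCompl V V₁) (p : Module.End R M) :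
    (ker (V₁.projectionOnto V hV.symm ∘ₗ p ∘ₗ V.subtype)).map V.subtype = V ⊓ V.comap p := by
  ext x
  simp only [mem_map, mem_ker, mem_inf, mem_comap, comp_apply, subtype_apply,
    projectionOnto_apply_eq_zero_iff]
  constructor
  · rintro ⟨v, hv, rfl⟩
    exact ⟨v.2, hv⟩
  · rintro ⟨hxV, hpx⟩
    exact ⟨⟨x, hxV⟩, hpx, rfl⟩

theorem hasSIP_of_isDirectSummand_map_ker
    (H : ∀ (V V₁ : Submodule R M), IsCompl V V₁ → ∀ h : V →ₗ[R] V₁,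
      IsDirectSummand ((ker h).map V.subtype)) :
    HasSIP R M := by
  intro U V hU hV
  obtain ⟨U₁, hUU₁⟩ := isDirectSummand_iff_exists_isCompl.1 hU
  obtain ⟨V₁, hVV₁⟩ := isDirectSummand_iff_exists_isCompl.1 hV
  have hK := H V V₁ hVV₁ (V₁.projectionOnto V hVV₁.symm ∘ₗ U₁.projection U hUU₁.symm ∘ₗ V.subtype)
  rw [map_ker_projectionOnto_comp_eq_inf_comap hVV₁] at hK
  simpa only [ker_projection] using (isIdempotentElem_projection _).isDirectSummand_ker_inf hK

theorem hasSIP_of_forall_isDirectSummand_inf_range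
    (H : ∀ A : Submodule R M, IsDirectSummand A →
      ∀ f : A →ₗ[R] M, (∃ g : M →ₗ[R] A, g ∘ₗ f = LinearMap.id) →
        IsDirectSummand (A ⊓ range f)) :
    HasSIP R M :=
  hasSIP_of_isDirectSummand_map_ker fun V V₁ hV h ↦ by
    rw [← inf_range_subtype_add_eq_map_ker hV.disjoint h]
    exact H V (isDirectSummand_iff_exists_isCompl.2 ⟨V₁, hV⟩) _
      ⟨_, projectionOnto_comp_subtype_add hV h⟩

theorem hasSIP_of_forall_isDirectSummand_inf_ker
    (H : ∀ A : Submodule R M, IsDirectSummand A →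
      ∀ f : M →ₗ[R] M ⧸ A, (∃ g : M ⧸ A →ₗ[R] M, f ∘ₗ g = LinearMap.id) →
        IsDirectSummand (A ⊓ ker f)) :
    HasSIP R M :=
  hasSIP_of_isDirectSummand_map_ker fun V V₁ hV h ↦ by
    rw [← inf_ker_mkQ_comp_sub_eq_map_ker hV h]
    exact H V (isDirectSummand_iff_exists_isCompl.2 ⟨V₁, hV⟩) _
      ⟨_, mkQ_comp_sub_comp_quotientEquivOfIsCompl hV h⟩

end SummandIntersection

/-- characterizations of SIP modules via split monomorphisms and
split epimorphisms. -/
theorem statement_2 (R : Type u) [Ring R] (M : Type v) [AddCommGroup M] [Module Rᵐᵒᵖ M] :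
    List.TFAE [
      HasSIP Rᵐᵒᵖ M,
      ∀ A : Submodule Rᵐᵒᵖ M, IsDirectSummand A →
        ∀ f : A →ₗ[Rᵐᵒᵖ] M, (∃ g : M →ₗ[Rᵐᵒᵖ] A, g ∘ₗ f = LinearMap.id) →
          IsDirectSummand (A ⊓ LinearMap.range f),
      ∀ A : Submodule Rᵐᵒᵖ M, IsDirectSummand A →
        ∀ f : M →ₗ[Rᵐᵒᵖ] M ⧸ A, (∃ g : M ⧸ A →ₗ[Rᵐᵒᵖ] M, f ∘ₗ g = LinearMap.id) →
          IsDirectSummand (A ⊓ LinearMap.ker f)] := by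
  tfae_have 1 → 2 := fun hM A hA _ ⟨_, hgf⟩ ↦ hM _ _ hA (isDirectSummand_range_of_comp_eq_id hgf)
  tfae_have 1 → 3 := fun hM A hA _ ⟨_, hfg⟩ ↦ hM _ _ hA (isDirectSummand_ker_of_comp_eq_id hfg)
  tfae_have 2 → 1 := hasSIP_of_forall_isDirectSummand_inf_range
  tfae_have 3 → 1 := hasSIP_of_forall_isDirectSummand_inf_ker
  tfae_finish
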